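/- arXiv:2205.08117 — 4 statements merged into one kernel-verified Lean document; each statement's English description precedes it below -/
import Mathlib

section
/- The kernel of the surjective k-algebra homomorphism from the polynomial ring k[x_1,…,x_n, y_s,…,y_n] to the Rees ring R[𝔞T] sending x_i ↦ x_i (1 ≤ i ≤ n) and y_j ↦ x_j^{v_j}T (s ≤ j ≤ n) is generated by the elements x_i^{v_i}·y_j − x_j^{v_j}·y_i for s ≤ i < j ≤ n. -/
/-!
Both sides of a relation `x_i^{v_i} y_j - x_j^{v_j} y_i` map to `x_i^{v_i} x_j^{v_j} T`.
Conversely, call a monomial standard if no leading term `x_j^{v_j} y_i` (`i < j`) of a relation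
divides it. The rewriting `x_j^{v_j} y_i ↦ x_i^{v_i} y_j` pushes `y`-degree towards larger
indices, so it terminates, and every polynomial is congruent modulo the relations to a
combination of standard monomials. Standard monomials have pairwise distinct images
`x^α T^m`: at the largest index `j` where the `y`-exponents of two of them differ, the one with
the smaller `y_j`-exponent has `x_j`-exponent at least `v_j` (compare the `x_j`-exponents of the
images), hence no `y_i` with `i < j`, and then its `T`-degree is too small. So a standard
combination in the kernel vanishes.
-/

open MvPolynomial
open scoped Finset

namespace ReesPresentation

variable {R σ ι : Type*} [CommRing R] (e : ι → σ) (w : ι → ℕ)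

noncomputable def reesMap : MvPolynomial (σ ⊕ ι) R →ₐ[R] Polynomial (MvPolynomial σ R) :=
  aeval <| Sum.elim (fun a => Polynomial.C (X a))
    fun j => Polynomial.C (X (e j) ^ w j) * Polynomial.X

theorem range_reesMap :
    (reesMap (R := R) e w).range = Algebra.adjoin R
      (Set.range (fun a => Polynomial.C (X a)) ∪
        Set.range fun j => Polynomial.C (X (e j) ^ w j) * Polynomial.X) := by
  rw [reesMap, ← Algebra.adjoin_range_eq_range_aeval, Set.Sum.elim_range]

section Exponents

variable [Fintype ι]

def tDegree (d : σ ⊕ ι →₀ ℕ) : ℕ := ∑ j, d (Sum.inr j)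

noncomputable def xExponent (d : σ ⊕ ι →₀ ℕ) : σ →₀ ℕ :=
  d.comapDomain Sum.inl Sum.inl_injective.injOn +
    ∑ j, Finsupp.single (e j) (w j * d (Sum.inr j))

theorem tDegree_add (d d' : σ ⊕ ι →₀ ℕ) : tDegree (d + d') = tDegree d + tDegree d' := by
  simp [tDegree, Finset.sum_add_distrib]

theorem xExponent_add (d d' : σ ⊕ ι →₀ ℕ) :
    xExponent e w (d + d') = xExponent e w d + xExponent e w d' := by
  simp only [xExponent, Finsupp.comapDomain_add_of_injective Sum.inl_injective,
    Finsupp.add_apply, mul_add, Finsupp.single_add, Finset.sum_add_distrib]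
  abel

theorem xExponent_apply_of_injective (he : Function.Injective e) (d : σ ⊕ ι →₀ ℕ) (j : ι) :
    xExponent e w d (e j) = d (Sum.inl (e j)) + w j * d (Sum.inr j) := by
  classical
  simp [xExponent, Finsupp.single_apply, he.eq_iff]

theorem reesMap_monomial_single_one (x : σ ⊕ ι) (m : ℕ) :
    reesMap (R := R) e w (monomial (Finsupp.single x m) 1) =
      Polynomial.monomial (tDegree (Finsupp.single x m))
        (monomial (xExponent e w (Finsupp.single x m)) 1) := by
  classical
  rw [← X_pow_eq_monomial, map_pow, reesMap, aeval_X]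
  cases x with
  | inl a =>
    have ht : tDegree (Finsupp.single (Sum.inl a : σ ⊕ ι) m) = 0 := by simp [tDegree]
    have hx : xExponent e w (Finsupp.single (Sum.inl a : σ ⊕ ι) m) = Finsupp.single a m := by
      simp [xExponent]
    rw [ht, hx, Sum.elim_inl, ← X_pow_eq_monomial, Polynomial.monomial_zero_left,
      Polynomial.C_pow]
  | inr j =>
    have ht : tDegree (Finsupp.single (Sum.inr j : σ ⊕ ι) m) = m := by
      simp [tDegree, Finsupp.single_apply]
    have hx : xExponent e w (Finsupp.single (Sum.inr j : σ ⊕ ι) m) =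
        Finsupp.single (e j) (w j * m) := by
      rw [xExponent, Finsupp.comapDomain_single_of_not_mem_range (by simp), zero_add,
        Finset.sum_eq_single j (fun i _ hij => by simp [hij]) (by simp), Finsupp.single_eq_same]
    rw [ht, hx, Sum.elim_inr, ← X_pow_eq_monomial, ← Polynomial.C_mul_X_pow_eq_monomial]
    simp only [mul_pow, pow_mul, map_pow]

theorem reesMap_monomial_one (d : σ ⊕ ι →₀ ℕ) :
    reesMap (R := R) e w (monomial d 1) =
      Polynomial.monomial (tDegree d) (monomial (xExponent e w d) 1) := by
  induction d using Finsupp.induction with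
  | zero => simp [tDegree, xExponent]
  | single_add x m d _ _ ih =>
    rw [← mul_one (1 : R), ← monomial_mul, map_mul, ih, reesMap_monomial_single_one, tDegree_add,
      xExponent_add, Polynomial.monomial_mul_monomial, monomial_mul]

theorem reesMap_monomial (d : σ ⊕ ι →₀ ℕ) (c : R) :
    reesMap e w (monomial d c) =
      Polynomial.monomial (tDegree d) (monomial (xExponent e w d) c) := by
  rw [← mul_one c, ← smul_eq_mul, ← smul_monomial, map_smul, reesMap_monomial_one,
    Polynomial.smul_monomial, smul_monomial]

end Exponents

variable [LinearOrder ι]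

variable (R) in
noncomputable def relations : Ideal (MvPolynomial (σ ⊕ ι) R) :=
  Ideal.span {q | ∃ i j : ι, i < j ∧
    q = X (Sum.inl (e i)) ^ w i * X (Sum.inr j) - X (Sum.inl (e j)) ^ w j * X (Sum.inr i)}

theorem relations_le_ker_reesMap : relations R e w ≤ RingHom.ker (reesMap (R := R) e w) := by
  rw [relations, Ideal.span_le]
  rintro q ⟨i, j, -, rfl⟩
  simp only [SetLike.mem_coe, RingHom.mem_ker, map_sub, map_mul, map_pow, reesMap, aeval_X,
    Sum.elim_inl, Sum.elim_inr]
  ring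

def IsStandard (d : σ ⊕ ι →₀ ℕ) : Prop :=
  ∀ i j : ι, i < j → w j ≤ d (Sum.inl (e j)) → d (Sum.inr i) = 0

variable {e w} [Fintype ι]

theorem tDegree_eq_sum_le_add_sum_lt (d : σ ⊕ ι →₀ ℕ) (j : ι) :
    tDegree d = ∑ i ∈ {i | i ≤ j}, d (Sum.inr i) + ∑ i ∈ {i | j < i}, d (Sum.inr i) := by
  simp_rw [tDegree, ← not_le]
  exact (Finset.sum_filter_add_sum_filter_not _ _ _).symm

theorem not_lt_of_isStandard (he : Function.Injective e) {d d' : σ ⊕ ι →₀ ℕ}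
    (hd' : IsStandard e w d') (ht : tDegree d = tDegree d')
    (hx : xExponent e w d = xExponent e w d') (j : ι)
    (habove : ∀ l, j < l → d (Sum.inr l) = d' (Sum.inr l)) :
    ¬ d' (Sum.inr j) < d (Sum.inr j) := by
  intro hlt
  have hxj := DFunLike.congr_fun hx (e j)
  rw [xExponent_apply_of_injective e w he, xExponent_apply_of_injective e w he] at hxj
  have hw : w j ≤ d' (Sum.inl (e j)) := by nlinarith
  have hbelow : ∑ i ∈ {i | i ≤ j}, d' (Sum.inr i) = d' (Sum.inr j) := by
    refine Finset.sum_eq_single_of_mem j (by simp) fun i hi hij => hd' i j ?_ hw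
    exact lt_of_le_of_ne (by simpa using hi) hij
  have hle : d (Sum.inr j) ≤ ∑ i ∈ {i | i ≤ j}, d (Sum.inr i) :=
    Finset.single_le_sum (f := fun i => d (Sum.inr i)) (fun _ _ => Nat.zero_le _) (by simp)
  have habove' : ∑ i ∈ {i | j < i}, d (Sum.inr i) = ∑ i ∈ {i | j < i}, d' (Sum.inr i) :=
    Finset.sum_congr rfl fun l hl => habove l (by simpa using hl)
  rw [tDegree_eq_sum_le_add_sum_lt d j, tDegree_eq_sum_le_add_sum_lt d' j, habove', hbelow] at ht
  omega

theorem eq_of_isStandard (he : Function.Injective e) {d d' : σ ⊕ ι →₀ ℕ}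
    (hd : IsStandard e w d) (hd' : IsStandard e w d') (ht : tDegree d = tDegree d')
    (hx : xExponent e w d = xExponent e w d') : d = d' := by
  have hinr : ∀ j, d (Sum.inr j) = d' (Sum.inr j) := by
    by_contra! hne
    obtain ⟨j, hj, hmax⟩ := Finset.exists_max_image {j | d (Sum.inr j) ≠ d' (Sum.inr j)} id
      (by simpa [Finset.filter_nonempty_iff] using hne)
    have habove : ∀ l, j < l → d (Sum.inr l) = d' (Sum.inr l) := fun l hl => by
      by_contra h
      exact (hmax l (by simpa using h)).not_gt hl
    rcases lt_or_gt_of_ne (by simpa using hj) with h | h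
    · exact not_lt_of_isStandard he hd ht.symm hx.symm j (fun l hl => (habove l hl).symm) h
    · exact not_lt_of_isStandard he hd' ht hx j habove h
  have hinl : d.comapDomain Sum.inl Sum.inl_injective.injOn =
      d'.comapDomain Sum.inl Sum.inl_injective.injOn := by
    simpa only [xExponent, hinr, add_left_inj] using hx
  ext (a | j)
  · exact DFunLike.congr_fun hinl a
  · exact hinr j

theorem coeff_coeff_reesMap (he : Function.Injective e) {g : MvPolynomial (σ ⊕ ι) R}
    (hg : ∀ d ∈ g.support, IsStandard e w d) {d₀ : σ ⊕ ι →₀ ℕ} (hd₀ : IsStandard e w d₀) :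
    ((reesMap e w g).coeff (tDegree d₀)).coeff (xExponent e w d₀) = g.coeff d₀ := by
  classical
  conv_lhs => rw [g.as_sum]
  simp only [map_sum, reesMap_monomial, Polynomial.finsetSum_coeff, Polynomial.coeff_monomial,
    coeff_sum]
  rw [Finset.sum_eq_single d₀]
  · simp
  · intro d hd hne
    split_ifs with ht
    · rw [coeff_monomial, if_neg fun hx => hne (eq_of_isStandard he (hg d hd) hd₀ ht hx)]
    · simp
  · intro hd₀
    simp [notMem_support_iff.1 hd₀]

theorem eq_zero_of_isStandard (he : Function.Injective e) {g : MvPolynomial (σ ⊕ ι) R}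
    (hg : ∀ d ∈ g.support, IsStandard e w d) (h : reesMap e w g = 0) : g = 0 := by
  ext d
  by_cases hd : d ∈ g.support
  · simp [← coeff_coeff_reesMap he hg (hg d hd), h]
  · simpa using hd

def inversions (d : σ ⊕ ι →₀ ℕ) : ℕ := ∑ j, #{l | j < l} * d (Sum.inr j)

theorem inversions_add (d d' : σ ⊕ ι →₀ ℕ) :
    inversions (d + d') = inversions d + inversions d' := by
  simp [inversions, mul_add, Finset.sum_add_distrib]

theorem inversions_single_inl (a : σ) (m : ℕ) :
    inversions (Finsupp.single (Sum.inl a : σ ⊕ ι) m) = 0 := by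
  simp [inversions]

theorem inversions_single_inr (j : ι) :
    inversions (Finsupp.single (Sum.inr j : σ ⊕ ι) 1) = #{l | j < l} := by
  classical
  simp [inversions, Finsupp.single_apply]

theorem exists_inversions_lt_sub_mem {d : σ ⊕ ι →₀ ℕ} (hd : ¬ IsStandard e w d) :
    ∃ d', inversions d' < inversions d ∧
      monomial d (1 : R) - monomial d' 1 ∈ relations R e w := by
  simp only [IsStandard, not_forall] at hd
  obtain ⟨i, j, hij, hw, hi⟩ := hd
  obtain ⟨c, rfl⟩ :
      ∃ c, d = c + Finsupp.single (Sum.inl (e j)) (w j) + Finsupp.single (Sum.inr i) 1 := by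
    have hi' : Finsupp.single (Sum.inr i) 1 ≤ d :=
      Finsupp.single_le_iff.2 (Nat.one_le_iff_ne_zero.2 hi)
    have hw' : Finsupp.single (Sum.inl (e j)) (w j) ≤ d - Finsupp.single (Sum.inr i) 1 :=
      Finsupp.single_le_iff.2 (by simpa using hw)
    exact ⟨_, by rw [tsub_add_cancel_of_le hw', tsub_add_cancel_of_le hi']⟩
  refine ⟨c + Finsupp.single (Sum.inl (e i)) (w i) + Finsupp.single (Sum.inr j) 1, ?_, ?_⟩
  · have hcard : #{l | j < l} < #{l | i < l} :=
      Finset.card_lt_card <| (Finset.ssubset_iff_of_subset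
        (Finset.monotone_filter_right _ fun _ _ => hij.trans)).2 ⟨j, by simp [hij], by simp⟩
    simp only [inversions_add, inversions_single_inl, inversions_single_inr]
    omega
  · have hfactor :
        monomial (c + Finsupp.single (Sum.inl (e j)) (w j) + Finsupp.single (Sum.inr i) 1) (1 : R)
          - monomial (c + Finsupp.single (Sum.inl (e i)) (w i) + Finsupp.single (Sum.inr j) 1) 1 =
        -monomial c 1 * (X (Sum.inl (e i)) ^ w i * X (Sum.inr j) -
          X (Sum.inl (e j)) ^ w j * X (Sum.inr i)) := by
      simp only [monomial_add_single]
      ring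
    rw [hfactor]
    exact Ideal.mul_mem_left _ _ (Ideal.subset_span ⟨i, j, hij, rfl⟩)

theorem exists_isStandard_monomial_sub_mem (d : σ ⊕ ι →₀ ℕ) :
    ∃ d', IsStandard e w d' ∧ monomial d (1 : R) - monomial d' 1 ∈ relations R e w := by
  by_cases hd : IsStandard e w d
  · exact ⟨d, hd, by simp⟩
  obtain ⟨d₁, hlt, hmem⟩ := exists_inversions_lt_sub_mem (R := R) hd
  obtain ⟨d', hd', hmem'⟩ := exists_isStandard_monomial_sub_mem d₁
  exact ⟨d', hd', by simpa using add_mem hmem hmem'⟩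
termination_by inversions d

theorem exists_isStandard_sub_mem (f : MvPolynomial (σ ⊕ ι) R) :
    ∃ g : MvPolynomial (σ ⊕ ι) R,
      (∀ d ∈ g.support, IsStandard e w d) ∧ f - g ∈ relations R e w := by
  classical
  induction f using MvPolynomial.induction_on' with
  | monomial d c =>
    obtain ⟨d', hd', hmem⟩ := exists_isStandard_monomial_sub_mem (R := R) (e := e) (w := w) d
    refine ⟨monomial d' c, fun d hd => ?_, ?_⟩
    · rwa [Finset.mem_singleton.1 (support_monomial_subset hd)]
    · simpa [mul_sub, C_mul_monomial] using Ideal.mul_mem_left _ (C c) hmem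
  | add f f' ih ih' =>
    obtain ⟨g, hg, hmem⟩ := ih
    obtain ⟨g', hg', hmem'⟩ := ih'
    refine ⟨g + g', fun d hd => ?_, by simpa [add_sub_add_comm] using add_mem hmem hmem'⟩
    rcases Finset.mem_union.1 (support_add hd) with hd | hd
    exacts [hg d hd, hg' d hd]

theorem ker_reesMap (he : Function.Injective e) :
    RingHom.ker (reesMap (R := R) e w) = relations R e w := by
  refine le_antisymm (fun f hf => ?_) (relations_le_ker_reesMap e w)
  obtain ⟨g, hg, hmem⟩ := exists_isStandard_sub_mem (e := e) (w := w) f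
  have hg0 : reesMap e w g = 0 := by
    simpa [RingHom.mem_ker.1 hf] using relations_le_ker_reesMap e w hmem
  simpa [eq_zero_of_isStandard he hg hg0] using hmem

end ReesPresentation

open ReesPresentation in
theorem statement1_general (k : Type) [Field k] (n s : ℕ)
    (v : ℕ → ℕ)
    (S : Type) [CommRing S] [Algebra k S]
    (ι : S →ₐ[k] Polynomial (MvPolynomial (Fin n) k)) (hι : Function.Injective ι)
    (hrange : ι.range = Algebra.adjoin k
      ((Set.range fun i : Fin n => Polynomial.C (MvPolynomial.X i)) ∪
        {q | ∃ i : Fin n, s ≤ (i : ℕ) + 1 ∧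
          q = Polynomial.C (MvPolynomial.X i ^ v ((i : ℕ) + 1)) * Polynomial.X}))
    (xS : Fin n → S)
    (hxS : ∀ i, ι (xS i) = Polynomial.C (MvPolynomial.X i))
    (tS : {i : Fin n // s ≤ (i : ℕ) + 1} → S)
    (htS : ∀ j, ι (tS j) = Polynomial.C (MvPolynomial.X j.1 ^ v ((j.1 : ℕ) + 1)) * Polynomial.X)
    (ψ : MvPolynomial (Fin n ⊕ {i : Fin n // s ≤ (i : ℕ) + 1}) k →ₐ[k] S)
    (hψ : ψ = MvPolynomial.aeval (Sum.elim xS tS)) :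
    Function.Surjective ψ ∧
    RingHom.ker ψ.toRingHom =
      Ideal.span {q | ∃ i j : {i : Fin n // s ≤ (i : ℕ) + 1}, (i.1 : ℕ) < (j.1 : ℕ) ∧
        q = MvPolynomial.X (Sum.inl i.1) ^ v ((i.1 : ℕ) + 1) * MvPolynomial.X (Sum.inr j)
          - MvPolynomial.X (Sum.inl j.1) ^ v ((j.1 : ℕ) + 1) * MvPolynomial.X (Sum.inr i)} := by
  have hcomp : ι.comp ψ =
      reesMap Subtype.val fun j : {i : Fin n // s ≤ (i : ℕ) + 1} => v ((j.1 : ℕ) + 1) := by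
    subst hψ
    ext (i | j) : 1 <;> simp [reesMap, hxS, htS]
  have hgens : {q | ∃ i : Fin n, s ≤ (i : ℕ) + 1 ∧
      q = Polynomial.C (MvPolynomial.X i ^ v ((i : ℕ) + 1)) * Polynomial.X} =
      Set.range fun j : {i : Fin n // s ≤ (i : ℕ) + 1} =>
        (Polynomial.C (MvPolynomial.X j.1 ^ v ((j.1 : ℕ) + 1)) * Polynomial.X :
          Polynomial (MvPolynomial (Fin n) k)) := by
    ext q
    simp [eq_comm]
  refine ⟨fun x => ?_, ?_⟩
  · obtain ⟨p, hp⟩ : ι x ∈ (ι.comp ψ).range := by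
      rw [hcomp, range_reesMap, ← hgens, ← hrange]
      exact ⟨x, rfl⟩
    exact ⟨p, hι hp⟩
  · rw [← RingHom.ker_comp_of_injective ψ.toRingHom (f := ι.toRingHom) hι]
    exact (congrArg (RingHom.ker ·) hcomp).trans (ker_reesMap Subtype.val_injective)

/-- Let `k` be a field, `R = k[x_1,…,x_n]`, `1 ≤ s ≤ n`, and `v_s,…,v_n ≥ 1`.  Let
`S = R[𝔞T]` be the Rees ring of the ideal `𝔞 = (x_s^{v_s},…,x_n^{v_n})`, realized (via the
injective `k`-algebra homomorphism `ι`) as the `k`-subalgebra of `R[T]` generated by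
`x_1,…,x_n` and `x_s^{v_s}T,…,x_n^{v_n}T`.  Then the `k`-algebra homomorphism
`ψ : k[x_1,…,x_n,y_s,…,y_n] → R[𝔞T]`, `x_i ↦ x_i`, `y_j ↦ x_j^{v_j}T`, is surjective and
its kernel is generated by the elements `x_i^{v_i}·y_j − x_j^{v_j}·y_i` for `s ≤ i < j ≤ n`.
(The variable `x_i` of the paper, `1 ≤ i ≤ n`, is indexed by `i' : Fin n` with
`(i' : ℕ) + 1 = i`; the polynomial variables `x_i` and `y_j` are `X (Sum.inl i)` and
`X (Sum.inr j)` respectively.) -/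
theorem statement1 (k : Type) [Field k] (n s : ℕ) (hn : 1 ≤ n) (hs : 1 ≤ s) (hsn : s ≤ n)
    (v : ℕ → ℕ) (hv : ∀ i, s ≤ i → i ≤ n → 1 ≤ v i)
    (S : Type) [CommRing S] [Algebra k S]
    (ι : S →ₐ[k] Polynomial (MvPolynomial (Fin n) k)) (hι : Function.Injective ι)
    (hrange : ι.range = Algebra.adjoin k
      ((Set.range fun i : Fin n => Polynomial.C (MvPolynomial.X i)) ∪
        {q | ∃ i : Fin n, s ≤ (i : ℕ) + 1 ∧
          q = Polynomial.C (MvPolynomial.X i ^ v ((i : ℕ) + 1)) * Polynomial.X}))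
    (xS : Fin n → S)
    (hxS : ∀ i, ι (xS i) = Polynomial.C (MvPolynomial.X i))
    (tS : {i : Fin n // s ≤ (i : ℕ) + 1} → S)
    (htS : ∀ j, ι (tS j) = Polynomial.C (MvPolynomial.X j.1 ^ v ((j.1 : ℕ) + 1)) * Polynomial.X)
    (ψ : MvPolynomial (Fin n ⊕ {i : Fin n // s ≤ (i : ℕ) + 1}) k →ₐ[k] S)
    (hψ : ψ = MvPolynomial.aeval (Sum.elim xS tS)) :
    Function.Surjective ψ ∧
    RingHom.ker ψ.toRingHom =
      Ideal.span {q | ∃ i j : {i : Fin n // s ≤ (i : ℕ) + 1}, (i.1 : ℕ) < (j.1 : ℕ) ∧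
        q = MvPolynomial.X (Sum.inl i.1) ^ v ((i.1 : ℕ) + 1) * MvPolynomial.X (Sum.inr j)
          - MvPolynomial.X (Sum.inl j.1) ^ v ((j.1 : ℕ) + 1) * MvPolynomial.X (Sum.inr i)} :=
  statement1_general k n s v S ι hι hrange xS hxS tS htS ψ hψ
end

section
/- The R[𝔞T]-module Ω¹_{R[𝔞T]/k} is generated by the 2n−s+1 differentials dx_1,…,dx_n, d(x_s^{v_s}T),…,d(x_n^{v_n}T), and the module of relations among these generators is generated by the binomial(n−s+1, 2) elements d(x_i^{v_i}·(x_j^{v_j}T)) − d(x_j^{v_j}·(x_i^{v_i}T)) for s ≤ i < j ≤ n; equivalently, Ω¹_{R[𝔞T]/k} is isomorphic to the cokernel of the R[𝔞T]-linear map R[𝔞T]^{binom(n−s+1,2)} → R[𝔞T]^{2n−s+1} whose column indexed by a pair {i,j} with s ≤ i < j ≤ n has entry v_i·x_i^{v_i−1}·(x_j^{v_j}T) in the coordinate of dx_i, entry −v_j·x_j^{v_j−1}·(x_i^{v_i}T) in the coordinate of dx_j, entry x_i^{v_i} in the coordinate of d(x_j^{v_j}T), entry −x_j^{v_j} in the coordinate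 of d(x_i^{v_i}T), and zero elsewhere. -/
/-
Map the polynomial ring `k[X_i, Y_j]` onto `S = R[𝔞T]` by `X_i ↦ x_i`, `Y_j ↦ x_j^{v_j} T`.
A monomial `X^a Y^b` goes to the monomial `x^{a + v·b} T^{|b|}`, and distinct monomials of
`R[T]` are `k`-linearly independent, so the kernel is spanned by the binomials `X^u - X^{u'}`
with equal images. Each of these lies in the ideal of the `X_i^{v_i} Y_j - X_j^{v_j} Y_i`, by
induction on the `T`-degree: if `Y_j` divides `X^{u'}` but not `X^u`, then `x_j^{v_j}` divides
the common image, so `X^u` is divisible by `X_j^{v_j} Y_l` for some `l`, which one relation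
trades for `X_l^{v_l} Y_j`. Given this presentation of `S`, the conormal sequence presents
`Ω[S⁄k]` by the Jacobian matrix of the relations, which is `M`.
-/

open MvPolynomial

theorem Module.Basis.ker_le_of_linearIndependent {k V W κ μ : Type*} [CommRing k]
    [AddCommGroup V] [Module k V] [AddCommGroup W] [Module k W]
    (B : Module.Basis κ k V) {φ : V →ₗ[k] W} {F : κ → μ} {b : μ → W}
    (hb : LinearIndependent k b) (hφ : ∀ u, φ (B u) = b (F u)) {N : Submodule k V}
    (hN : ∀ u u', F u = F u' → B u - B u' ∈ N) : LinearMap.ker φ ≤ N := by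
  classical
  intro x hx
  let rep : μ → V := fun m => if h : ∃ u, F u = m then B h.choose else 0
  have hfiber : Finsupp.mapDomain F (B.repr x) = 0 := by
    refine linearIndependent_iff.mp hb _ ?_
    rw [Finsupp.linearCombination_mapDomain,
      show b ∘ F = φ ∘ B from funext fun u => (hφ u).symm, ← Finsupp.apply_linearCombination,
      B.linearCombination_repr, LinearMap.mem_ker.mp hx]
  have hrep : Finsupp.linearCombination k (rep ∘ F) (B.repr x) = 0 := by
    rw [← Finsupp.linearCombination_mapDomain, hfiber, map_zero]
  have hsub : x = Finsupp.linearCombination k (fun u => B u - rep (F u)) (B.repr x) :=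
    calc x = Finsupp.linearCombination k B (B.repr x) -
          Finsupp.linearCombination k (rep ∘ F) (B.repr x) := by
          rw [hrep, sub_zero, B.linearCombination_repr]
      _ = _ := by simp only [Finsupp.linearCombination_apply, smul_sub, Finsupp.sum_sub]; rfl
  rw [hsub, Finsupp.linearCombination_apply]
  refine Submodule.finsuppSum_mem _ _ _ _ fun u _ => N.smul_mem _ ?_
  have h : ∃ u', F u' = F u := ⟨u, rfl⟩
  simpa only [rep, dif_pos h] using hN u h.choose h.choose_spec.symm

theorem MvPolynomial.aeval_surjective_of_range_eq_adjoin {R S A σ : Type*} [CommSemiring R]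
    [CommSemiring S] [Semiring A] [Algebra R S] [Algebra R A] {f : S →ₐ[R] A}
    (hf : Function.Injective f) {x : σ → S} (h : f.range = Algebra.adjoin R (Set.range (f ∘ x))) :
    Function.Surjective (aeval (R := R) x) := by
  rw [← AlgHom.range_eq_top, ← Algebra.adjoin_range_eq_range_aeval]
  apply Subalgebra.map_injective hf
  rw [AlgHom.map_adjoin, ← Set.range_comp, ← h, Algebra.map_top]

theorem KaehlerDifferential.exists_linearMap_ker_eq_span_pderiv
    {R S ι σ : Type*} [CommRing R] [CommRing S] [Algebra R S] [Finite ι] [DecidableEq ι]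
    (x : ι → S) (hx : Function.Surjective (aeval (R := R) x))
    (rel : σ → MvPolynomial ι R) (hrel : Ideal.span (Set.range rel) = RingHom.ker (aeval x)) :
    ∃ φ : (ι → S) →ₗ[S] Ω[S⁄R], (∀ i, φ (Pi.single i 1) = D R S (x i)) ∧
      Function.Surjective φ ∧
      LinearMap.ker φ = Submodule.span S (Set.range fun r i => aeval x (pderiv i (rel r))) := by
  let pres : Algebra.Presentation R S ι σ :=
    { Algebra.Generators.ofSurjective x hx with
      relation := rel
      span_range_relation_eq_ker := by rw [hrel, Algebra.Generators.ker_eq_ker_aeval_val]; rfl }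
  obtain ⟨hspan, hker⟩ := (Module.Relations.Solution.isPresentation_iff _).mp
    pres.differentialsSolution_isPresentation
  -- `pres.differentialsRelations.G` is `ι` only after unfolding, hence the explicit type of `e`
  -- and the `change`s below
  let e : (pres.differentialsRelations.G →₀ S) ≃ₗ[S] (ι → S) :=
    Finsupp.linearEquivFunOnFinite S S ι
  refine ⟨pres.differentialsSolution.π ∘ₗ e.symm.toLinearMap, fun i => ?_, ?_, ?_⟩
  · change pres.differentialsSolution.π ((Finsupp.linearEquivFunOnFinite S S ι).symm _) = _
    rw [Finsupp.linearEquivFunOnFinite_symm_single]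
    exact (Finsupp.linearCombination_single _ _ _).trans (one_smul _ _)
  · exact ((Module.Relations.Solution.surjective_π_iff_span_eq_top _).mpr hspan).comp
      e.symm.surjective
  · rw [LinearMap.ker_comp, hker, Submodule.comap_equiv_eq_map_symm, LinearEquiv.symm_symm,
      Submodule.map_span, ← Set.range_comp]
    congr
    ext r i
    change Finsupp.mapRange (algebraMap pres.Ring S) (map_zero _)
      ((mvPolynomialBasis R ι).repr (D R (MvPolynomial ι R) (rel r))) i = _
    rw [Finsupp.mapRange_apply, KaehlerDifferential.mvPolynomialBasis_repr_apply,
      Algebra.Generators.algebraMap_apply]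
    rfl

lemma Finsupp.prod_single_add_pow {α M : Type*} [CommMonoid M] (y : α → M) (a : α) (m : ℕ)
    (u : α →₀ ℕ) :
    (Finsupp.single a m + u).prod (fun a m => y a ^ m) =
      y a ^ m * u.prod (fun a m => y a ^ m) := by
  rw [Finsupp.prod_add_index' (fun _ => pow_zero _) (fun _ _ _ => pow_add _ _ _)]
  exact congrArg (· * _) (Finsupp.prod_single_index (pow_zero _))

section Rees

variable {ι : Type*} {P : ι → Prop} (e : ι → ℕ)

noncomputable def reesWeight : ι ⊕ Subtype P → (ι →₀ ℕ) × ℕ :=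
  Sum.elim (fun i => (Finsupp.single i 1, 0)) (fun j => (Finsupp.single j.1 (e j.1), 1))

noncomputable def reesDegree : (ι ⊕ Subtype P →₀ ℕ) →ₗ[ℕ] (ι →₀ ℕ) × ℕ :=
  Finsupp.linearCombination ℕ (reesWeight e)

@[simp]
lemma reesDegree_single (a : ι ⊕ Subtype P) (m : ℕ) :
    reesDegree e (Finsupp.single a m) = m • reesWeight e a :=
  Finsupp.linearCombination_single ..

lemma reesDegree_fst_apply [DecidablePred P] (u : ι ⊕ Subtype P →₀ ℕ) (i : ι) :
    (reesDegree e u).1 i = u (.inl i) + if h : P i then e i * u (.inr ⟨i, h⟩) else 0 := by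
  induction u using Finsupp.induction_linear with
  | zero => simp
  | add u w hu hw =>
    simp only [map_add, Prod.fst_add, Finsupp.add_apply, hu, hw]
    split_ifs <;> ring
  | single a m =>
    rcases a with a | ⟨a, ha⟩ <;>
      by_cases h : a = i <;> simp [reesWeight, h]
    subst i; simp [ha, mul_comm]

lemma reesDegree_snd_eq_zero_iff (u : ι ⊕ Subtype P →₀ ℕ) :
    (reesDegree e u).2 = 0 ↔ ∀ j, u (.inr j) = 0 := by
  rw [reesDegree, Finsupp.linearCombination_apply, Finsupp.sum, Prod.snd_sum,
    Finset.sum_eq_zero_iff]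
  simp [reesWeight]

lemma eq_of_reesDegree_eq_of_snd_eq_zero {u u' : ι ⊕ Subtype P →₀ ℕ}
    (h : reesDegree e u = reesDegree e u') (h₀ : (reesDegree e u).2 = 0) : u = u' := by
  classical
  have hu := (reesDegree_snd_eq_zero_iff e u).mp h₀
  have hu' := (reesDegree_snd_eq_zero_iff e u').mp (h ▸ h₀)
  ext (i | j)
  · simpa [reesDegree_fst_apply, hu, hu'] using congrArg (·.1 i) h
  · rw [hu, hu']

section CommMonoid

variable {M : Type*} [CommMonoid M] {y : ι ⊕ Subtype P → M}

lemma exists_prod_pow_eq_single_inr_add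
    (hy : ∀ i j : Subtype P, y (.inl i) ^ e i * y (.inr j) = y (.inl j) ^ e j * y (.inr i))
    {u u' : ι ⊕ Subtype P →₀ ℕ} (h : reesDegree e u = reesDegree e u') {j : Subtype P} (hj : u' (.inr j) ≠ 0) :
    ∃ u₀, reesDegree e (Finsupp.single (Sum.inr j) 1 + u₀) = reesDegree e u ∧
      (Finsupp.single (Sum.inr j) 1 + u₀).prod (fun a m => y a ^ m) =
        u.prod (fun a m => y a ^ m) := by
  classical
  by_cases huj : u (.inr j) = 0
  -- then `u` contains `X_j ^ e_j` (compare `x_j`-degrees) and some `Y_l` (compare `T`-degrees),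
  -- and `hy` trades `X_j ^ e_j Y_l` for `X_l ^ e_l Y_j`
  · obtain ⟨l, hl⟩ : ∃ l, u (.inr l) ≠ 0 := by
      by_contra! h'
      rw [← reesDegree_snd_eq_zero_iff, h, reesDegree_snd_eq_zero_iff] at h'
      exact hj (h' j)
    have hxj : e j ≤ u (.inl j) := by
      have := congrArg (·.1 j.1) h
      simp only [reesDegree_fst_apply, dif_pos j.2, huj] at this
      nlinarith [Nat.one_le_iff_ne_zero.mpr hj]
    obtain ⟨u₁, rfl⟩ := exists_add_of_le (Finsupp.single_le_iff.mpr hxj)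
    obtain ⟨u₀, rfl⟩ : ∃ u₀, u₁ = Finsupp.single (Sum.inr l) 1 + u₀ :=
      exists_add_of_le (Finsupp.single_le_iff.mpr (Nat.one_le_iff_ne_zero.mpr (by simpa using hl)))
    refine ⟨Finsupp.single (.inl l) (e l) + u₀, ?_, ?_⟩
    · ext1 <;> simp [reesWeight]
    · simp only [Finsupp.prod_single_add_pow, pow_one]
      rw [mul_left_comm, ← mul_assoc, ← hy, mul_assoc]
  · obtain ⟨u₀, rfl⟩ :=
      exists_add_of_le (Finsupp.single_le_iff.mpr (Nat.one_le_iff_ne_zero.mpr huj))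
    exact ⟨u₀, rfl, rfl⟩

lemma prod_pow_eq_of_reesDegree_eq
    (hy : ∀ i j : Subtype P, y (.inl i) ^ e i * y (.inr j) = y (.inl j) ^ e j * y (.inr i))
    {u u' : ι ⊕ Subtype P →₀ ℕ} (h : reesDegree e u = reesDegree e u') :
    u.prod (fun a m => y a ^ m) = u'.prod (fun a m => y a ^ m) := by
  induction hd : (reesDegree e u).2 generalizing u u' with
  | zero => rw [eq_of_reesDegree_eq_of_snd_eq_zero e h hd]
  | succ d ih =>
    obtain ⟨j, hj⟩ : ∃ j, u' (.inr j) ≠ 0 := by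
      by_contra! h'
      rw [h, (reesDegree_snd_eq_zero_iff e u').mpr h'] at hd
      exact Nat.zero_ne_add_one d hd
    obtain ⟨u₀', rfl⟩ :=
      exists_add_of_le (Finsupp.single_le_iff.mpr (Nat.one_le_iff_ne_zero.mpr hj))
    obtain ⟨u₀, hdeg, hprod⟩ := exists_prod_pow_eq_single_inr_add e hy h hj
    rw [← hprod, Finsupp.prod_single_add_pow, Finsupp.prod_single_add_pow]
    refine congrArg _ (ih (add_left_cancel (by simpa only [map_add] using hdeg.trans h)) ?_)
    rw [← hdeg, map_add, Prod.snd_add] at hd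
    simp only [reesDegree_single, reesWeight, Sum.elim_inr, Prod.smul_mk, smul_eq_mul, mul_one]
      at hd
    omega

end CommMonoid

variable (k : Type*) [CommRing k]

noncomputable def reesGenerator : ι ⊕ Subtype P → Polynomial (MvPolynomial ι k) :=
  Sum.elim (fun i => Polynomial.C (X i)) (fun j => Polynomial.C (X j.1 ^ e j.1) * Polynomial.X)

lemma range_reesGenerator : Set.range (reesGenerator (P := P) e k) =
    Set.range (fun i => Polynomial.C (X i)) ∪
      {q | ∃ i, P i ∧ q = Polynomial.C (X i ^ e i) * Polynomial.X} := by
  rw [reesGenerator, Set.Sum.elim_range]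
  congr 1
  ext q
  simp [eq_comm]

noncomputable def reesMap : MvPolynomial (ι ⊕ Subtype P) k →ₐ[k] Polynomial (MvPolynomial ι k) :=
  aeval (reesGenerator e k)

noncomputable def reesRelation (i j : Subtype P) : MvPolynomial (ι ⊕ Subtype P) k :=
  X (.inl i) ^ e i * X (.inr j) - X (.inl j) ^ e j * X (.inr i)

lemma reesMap_reesRelation (i j : Subtype P) : reesMap e k (reesRelation e k i j) = 0 := by
  simp only [reesRelation, reesMap, reesGenerator, map_sub, map_mul, map_pow, aeval_X,
    Sum.elim_inl, Sum.elim_inr]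
  ring

noncomputable def reesBasis : Module.Basis ((ι →₀ ℕ) × ℕ) k (Polynomial (MvPolynomial ι k)) :=
  (basisMonomials ι k).smulTower (Polynomial.basisMonomials _)

lemma reesBasis_apply (m : (ι →₀ ℕ) × ℕ) :
    reesBasis k m = Polynomial.C (monomial m.1 1) * Polynomial.X ^ m.2 := by
  simp [reesBasis, Module.Basis.smulTower_apply, Polynomial.smul_eq_C_mul,
    Polynomial.X_pow_eq_monomial]

lemma reesBasis_add (m m' : (ι →₀ ℕ) × ℕ) :
    reesBasis k (m + m') = reesBasis k m * reesBasis k m' := by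
  have : monomial (m.1 + m'.1) (1 : k) = monomial m.1 1 * monomial m'.1 1 := by
    rw [monomial_mul, mul_one]
  rw [reesBasis_apply, reesBasis_apply, reesBasis_apply, Prod.fst_add, Prod.snd_add, this,
    Polynomial.C_mul, pow_add]
  ring

lemma reesBasis_nsmul (c : ℕ) (m : (ι →₀ ℕ) × ℕ) : reesBasis k (c • m) = reesBasis k m ^ c := by
  induction c with
  | zero => simp [reesBasis_apply]
  | succ c ih => rw [succ_nsmul, reesBasis_add, ih, pow_succ]

lemma reesGenerator_eq_reesBasis (a : ι ⊕ Subtype P) :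
    reesGenerator e k a = reesBasis k (reesWeight e a) := by
  rcases a with i | j <;>
    simp only [reesGenerator, reesWeight, reesBasis_apply, Sum.elim_inl, Sum.elim_inr,
      X_pow_eq_monomial, pow_zero, pow_one, mul_one]
  rfl

lemma reesMap_monomial (u : ι ⊕ Subtype P →₀ ℕ) :
    reesMap e k (monomial u 1) = reesBasis k (reesDegree e u) := by
  induction u using Finsupp.induction with
  | zero => simp [reesBasis_apply]
  | single_add a m u _ _ ih =>
    rw [monomial_single_add, map_mul, map_pow, ih, map_add,
      reesDegree_single, reesBasis_add, reesBasis_nsmul, reesMap, aeval_X,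
      reesGenerator_eq_reesBasis]

theorem ker_reesMap_le {I : Ideal (MvPolynomial (ι ⊕ Subtype P) k)}
    (hI : ∀ i j, reesRelation e k i j ∈ I) : RingHom.ker (reesMap e k) ≤ I := by
  have hbinomial : ∀ u u', reesDegree e u = reesDegree e u' →
      monomial u (1 : k) - monomial u' 1 ∈ I := by
    intro u u' h
    rw [← Ideal.Quotient.eq]
    simpa only [monomial_eq, C_1, one_mul, map_finsuppProd, map_pow] using
      prod_pow_eq_of_reesDegree_eq e (y := fun a => Ideal.Quotient.mk I (X a))
        (fun i j => by simpa [← map_pow, ← map_mul] using Ideal.Quotient.eq.mpr (hI i j)) h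
  intro f hf
  exact (basisMonomials _ k).ker_le_of_linearIndependent (reesBasis k).linearIndependent
    (φ := (reesMap e k).toLinearMap) (N := I.restrictScalars k)
    (by simpa using reesMap_monomial e k) (by simpa using hbinomial) hf

lemma reesRelation_mem_of_forall_lt [LinearOrder ι] {I : Ideal (MvPolynomial (ι ⊕ Subtype P) k)}
    (h : ∀ i j : Subtype P, i.1 < j.1 → reesRelation e k i j ∈ I) (i j : Subtype P) :
    reesRelation e k i j ∈ I := by
  rcases lt_trichotomy i.1 j.1 with hij | hij | hij
  · exact h i j hij
  · simp [reesRelation, Subtype.ext hij]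
  · simpa [reesRelation] using I.neg_mem (h j i hij)

lemma pderiv_inl_reesRelation [DecidableEq ι] (a : ι) (i j : Subtype P) :
    pderiv (Sum.inl a) (reesRelation e k i j) =
      (if a = i then (e i : MvPolynomial (ι ⊕ Subtype P) k) * X (.inl i) ^ (e i - 1) * X (.inr j)
        else 0) -
      (if a = j then (e j : MvPolynomial (ι ⊕ Subtype P) k) * X (.inl j) ^ (e j - 1) * X (.inr i)
        else 0) := by
  simp only [reesRelation, map_sub, Derivation.leibniz, Derivation.leibniz_pow, pderiv_X,
    Pi.single_apply, Sum.inl.injEq, reduceCtorEq, if_false, eq_comm (a := a)]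
  split_ifs <;> ring

lemma pderiv_inr_reesRelation [DecidableEq ι] (b i j : Subtype P) :
    pderiv (Sum.inr b) (reesRelation e k i j) =
      (if b = j then (X (.inl i) ^ e i : MvPolynomial (ι ⊕ Subtype P) k) else 0) -
        (if b = i then X (.inl j) ^ e j else 0) := by
  simp [reesRelation, pderiv_X, Pi.single_apply, eq_comm]

lemma jacobian_reesRelation_eq_col [DecidableEq ι] {S ρ : Type*} [CommRing S] [Algebra k S]
    {y : ι ⊕ Subtype P → S} {M : Matrix (ι ⊕ Subtype P) ρ S} {i j : ρ → Subtype P}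
    (hij : ∀ r, (i r).1 ≠ (j r).1)
    (h₁ : ∀ r, M (.inl (i r)) r = (e (i r) : S) * y (.inl (i r)) ^ (e (i r) - 1) * y (.inr (j r)))
    (h₂ : ∀ r, M (.inl (j r)) r =
      -((e (j r) : S) * y (.inl (j r)) ^ (e (j r) - 1) * y (.inr (i r))))
    (h₃ : ∀ r, M (.inr (j r)) r = y (.inl (i r)) ^ e (i r))
    (h₄ : ∀ r, M (.inr (i r)) r = -(y (.inl (j r)) ^ e (j r)))
    (h₅ : ∀ r a, a ≠ (i r).1 → a ≠ (j r).1 → M (.inl a) r = 0)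
    (h₆ : ∀ r (b : Subtype P), b.1 ≠ (i r).1 → b.1 ≠ (j r).1 → M (.inr b) r = 0) :
    (fun r a => aeval y (pderiv a (reesRelation e k (i r) (j r)))) = M.col := by
  ext r (a | b)
  all_goals simp only [Matrix.col_apply, pderiv_inl_reesRelation, pderiv_inr_reesRelation]
  · split_ifs with hai haj haj
    · exact absurd (hai.symm.trans haj) (hij r)
    · simp [hai, h₁]
    · simp [haj, h₂]
    · simp [h₅ r a hai haj]
  · split_ifs with hbj hbi hbi
    · exact absurd (congrArg Subtype.val (hbi.symm.trans hbj)) (hij r)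
    · simp [hbj, h₃]
    · simp [hbi, h₄]
    · exact (h₆ r b (fun h => hbi (Subtype.ext h)) fun h => hbj (Subtype.ext h)).symm

end Rees

/-- The variable `x_i`, `1 ≤ i ≤ n`, of the paper is `X i'` for `i' : Fin n` with
`(i' : ℕ) + 1 = i`. -/
theorem statement2 (k : Type) [Field k] (n s : ℕ) (v : ℕ → ℕ)
    (S : Type) [CommRing S] [Algebra k S]
    (ι : S →ₐ[k] Polynomial (MvPolynomial (Fin n) k)) (hι : Function.Injective ι)
    (hrange : ι.range = Algebra.adjoin k
      ((Set.range fun i : Fin n => Polynomial.C (MvPolynomial.X i)) ∪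
        {q | ∃ i : Fin n, s ≤ (i : ℕ) + 1 ∧
          q = Polynomial.C (MvPolynomial.X i ^ v ((i : ℕ) + 1)) * Polynomial.X}))
    (xS : Fin n → S)
    (hxS : ∀ i, ι (xS i) = Polynomial.C (MvPolynomial.X i))
    (tS : {i : Fin n // s ≤ (i : ℕ) + 1} → S)
    (htS : ∀ j, ι (tS j) = Polynomial.C (MvPolynomial.X j.1 ^ v ((j.1 : ℕ) + 1)) * Polynomial.X)
    (M : Matrix (Fin n ⊕ {i : Fin n // s ≤ (i : ℕ) + 1})
      {q : Fin n × Fin n // s ≤ (q.1 : ℕ) + 1 ∧ (q.1 : ℕ) < (q.2 : ℕ)} S)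
    (hM₁ : ∀ rel, M (Sum.inl rel.1.1) rel =
      (v ((rel.1.1 : ℕ) + 1) : S) * xS rel.1.1 ^ (v ((rel.1.1 : ℕ) + 1) - 1) *
        tS ⟨rel.1.2, by obtain ⟨h1, h2⟩ := rel.2; omega⟩)
    (hM₂ : ∀ rel, M (Sum.inl rel.1.2) rel =
      -((v ((rel.1.2 : ℕ) + 1) : S) * xS rel.1.2 ^ (v ((rel.1.2 : ℕ) + 1) - 1) *
        tS ⟨rel.1.1, rel.2.1⟩))
    (hM₃ : ∀ rel, M (Sum.inr ⟨rel.1.2, by obtain ⟨h1, h2⟩ := rel.2; omega⟩) rel =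
      xS rel.1.1 ^ v ((rel.1.1 : ℕ) + 1))
    (hM₄ : ∀ rel, M (Sum.inr ⟨rel.1.1, rel.2.1⟩) rel =
      -(xS rel.1.2 ^ v ((rel.1.2 : ℕ) + 1)))
    (hM₅ : ∀ rel, ∀ a : Fin n, a ≠ rel.1.1 → a ≠ rel.1.2 → M (Sum.inl a) rel = 0)
    (hM₆ : ∀ rel, ∀ b : {i : Fin n // s ≤ (i : ℕ) + 1}, b.1 ≠ rel.1.1 → b.1 ≠ rel.1.2 →
      M (Sum.inr b) rel = 0) :
    ∃ φ : ((Fin n ⊕ {i : Fin n // s ≤ (i : ℕ) + 1}) → S) →ₗ[S] KaehlerDifferential k S,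
      (∀ i : Fin n, φ (Pi.single (Sum.inl i) 1) = KaehlerDifferential.D k S (xS i)) ∧
      (∀ j : {i : Fin n // s ≤ (i : ℕ) + 1},
        φ (Pi.single (Sum.inr j) 1) = KaehlerDifferential.D k S (tS j)) ∧
      Function.Surjective φ ∧
      LinearMap.ker φ = LinearMap.range M.mulVecLin := by
  set e : Fin n → ℕ := fun i => v ((i : ℕ) + 1)
  set y := Sum.elim xS tS
  set g : {q : Fin n × Fin n // s ≤ (q.1 : ℕ) + 1 ∧ (q.1 : ℕ) < (q.2 : ℕ)} →
      MvPolynomial (Fin n ⊕ {i : Fin n // s ≤ (i : ℕ) + 1}) k :=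
    fun r => reesRelation e k ⟨r.1.1, r.2.1⟩ ⟨r.1.2, by omega⟩
  have hιy : ι ∘ y = reesGenerator e k := by
    ext1 (i | j) <;> simp [y, reesGenerator, hxS, htS, e]
  have hsurj : Function.Surjective (aeval (R := k) y) :=
    aeval_surjective_of_range_eq_adjoin hι (by rw [hιy, range_reesGenerator]; exact hrange)
  have hker : Ideal.span (Set.range g) = RingHom.ker (aeval y) := by
    have hker' : RingHom.ker (aeval y) = RingHom.ker (reesMap e k) := by
      have hcomp : ι.comp (aeval y) = reesMap e k := (comp_aeval y ι).trans (congrArg aeval hιy)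
      ext f
      simp [RingHom.mem_ker, ← hcomp, map_eq_zero_iff ι hι]
    rw [hker']
    refine le_antisymm (Ideal.span_le.mpr ?_) (ker_reesMap_le e k ?_)
    · rintro _ ⟨r, rfl⟩
      exact reesMap_reesRelation e k _ _
    · exact reesRelation_mem_of_forall_lt e k fun i j hij =>
        Ideal.subset_span ⟨⟨(i.1, j.1), i.2, hij⟩, rfl⟩
  obtain ⟨φ, hφ, hφsurj, hφker⟩ :=
    KaehlerDifferential.exists_linearMap_ker_eq_span_pderiv y hsurj g hker
  refine ⟨φ, fun i => hφ (.inl i), fun j => hφ (.inr j), hφsurj, ?_⟩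
  rw [hφker, Matrix.range_mulVecLin, ← jacobian_reesRelation_eq_col e k (y := y)
    (i := fun r => ⟨r.1.1, r.2.1⟩) (j := fun r => ⟨r.1.2, by omega⟩)
    (fun r => Fin.ne_of_lt r.2.2) hM₁ hM₂ hM₃ hM₄ hM₅ hM₆]
end

section
/- Let k be a field, A a k-algebra of finite presentation, and B = A[t_1,…,t_m] a polynomial ring in m variables over A. Then for every integer i, the Fitting ideal Fitt_{i+m}(Ω¹_{B/k}) equals the extension to B of the Fitting ideal Fitt_i(Ω¹_{A/k}). -/
/-!
Since `A → B = A[t₁,…,tₘ]` is smooth, the first fundamental sequence of Kähler differentials is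
split exact and `Ω[B⁄k] ≅ (B ⊗[A] Ω[A⁄k]) × Bᵐ`. Fitting ideals do not depend on the
presentation, so adding a free summand of rank `m` shifts their index by `m`, and they commute
with base change because `B ⊗[A] -` is right exact.

Independence of the presentation is proved by comparing two generating families with their
union: a redundant generator `yⱼ = ∑ Wⱼₗ xₗ` only adds the relation `yⱼ - ∑ Wⱼₗ xₗ`, and expanding
each row of a relation matrix for the union into these relations and relations among the `xₗ`
writes its `(s + p)`-minors as combinations of `s`-minors of relation matrices for the `xₗ`.
-/

/-- The `i`-th Fitting ideal of an `A`-module `M` (for `i : ℤ`, with the convention that it is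
the unit ideal for `i ≥ m` when `M` is generated by `m` elements, and zero for `i < 0`):
it is generated by all `(m - i)`-minors of relation matrices of arbitrary generating
families of `M`. -/
noncomputable def fittingIdeal (A : Type*) [CommRing A] (M : Type*) [AddCommGroup M]
    [Module A M] (i : ℤ) : Ideal A :=
  Ideal.span { d : A | ∃ (m : ℕ) (π : (Fin m → A) →ₗ[A] M), Function.Surjective π ∧
    ∃ (v : Fin ((m - i).toNat) → Fin m → A) (c : Fin ((m - i).toNat) → Fin m),
      (∀ a, π (v a) = 0) ∧ d = (Matrix.of fun a b => v a (c b)).det }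

open Function Matrix TensorProduct Finset KaehlerDifferential

section Span

variable {R : Type*} [CommRing R] {ι : Type*}

/-- Expanding each row as a combination of vectors of `Y`, the determinant is a combination of
determinants with rows in `Y`. -/
theorem det_mem_of_forall_mem_span {s : ℕ} {J : Ideal R} {Y : Set (ι → R)} (c : Fin s → ι)
    (hY : ∀ r : Fin s → ι → R, (∀ a, r a ∈ Y) → (of fun a b => r a (c b)).det ∈ J)
    (v : Fin s → ι → R) (hv : ∀ a, v a ∈ Submodule.span R Y) :
    (of fun a b => v a (c b)).det ∈ J := by
  choose k f g hfg using fun a => Submodule.mem_span_set'.mp (hv a)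
  have hv' : (of fun a b => v a (c b)) =
      of fun a => ∑ i, f a i • fun b => (g a i : ι → R) (c b) := by
    ext a b
    simp [← hfg a, Finset.sum_apply]
  rw [hv']
  change (detRowAlternating : (Fin s → R) [⋀^Fin s]→ₗ[R] R).toMultilinearMap
    (fun a => ∑ i, f a i • fun b => (g a i : ι → R) (c b)) ∈ J
  rw [MultilinearMap.map_sum]
  refine sum_mem fun φ _ => ?_
  rw [MultilinearMap.map_smul_univ]
  exact J.mul_mem_left _ (hY (fun a => g a (φ a)) fun a => (g a (φ a)).2)

end Span

section Minors

variable {R : Type*} [CommRing R] {M : Type*} [AddCommGroup M] [Module R M] {ι κ : Type*}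

def minorsIdeal (ρ : (ι → R) →ₗ[R] M) (s : ℕ) : Ideal R :=
  Ideal.span {d | ∃ (v : Fin s → ι → R) (c : Fin s → ι), (∀ a, ρ (v a) = 0) ∧
    d = (of fun a b => v a (c b)).det}

theorem det_mem_minorsIdeal (ρ : (ι → R) →ₗ[R] M) {s : ℕ} (v : Fin s → ι → R) (c : Fin s → ι)
    (hv : ∀ a, ρ (v a) = 0) : (of fun a b => v a (c b)).det ∈ minorsIdeal ρ s :=
  Ideal.subset_span ⟨v, c, hv, rfl⟩

theorem minorsIdeal_zero (ρ : (ι → R) →ₗ[R] M) : minorsIdeal ρ 0 = ⊤ := by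
  rw [Ideal.eq_top_iff_one]
  simpa using det_mem_minorsIdeal ρ finZeroElim finZeroElim finZeroElim

theorem minorsIdeal_antitone (ρ : (ι → R) →ₗ[R] M) : Antitone (minorsIdeal ρ) := by
  refine antitone_nat_of_succ_le fun s => ?_
  rw [minorsIdeal, Ideal.span_le]
  rintro _ ⟨v, c, hv, rfl⟩
  rw [SetLike.mem_coe, det_succ_row_zero]
  exact Ideal.sum_mem _ fun j _ => Ideal.mul_mem_left _ _ <|
    det_mem_minorsIdeal ρ (fun a => v a.succ) (fun b => c (j.succAbove b)) fun a => hv a.succ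

theorem minorsIdeal_comp_funLeft_le (ρ : (ι → R) →ₗ[R] M) (e : ι ≃ κ) (s : ℕ) :
    minorsIdeal (ρ ∘ₗ LinearMap.funLeft R R e) s ≤ minorsIdeal ρ s := by
  rw [minorsIdeal, Ideal.span_le]
  rintro _ ⟨v, c, hv, rfl⟩
  simpa using det_mem_minorsIdeal ρ (fun a => v a ∘ e) (fun b => e.symm (c b)) hv

theorem minorsIdeal_comp_funLeft (ρ : (ι → R) →ₗ[R] M) (e : ι ≃ κ) (s : ℕ) :
    minorsIdeal (ρ ∘ₗ LinearMap.funLeft R R e) s = minorsIdeal ρ s := by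
  refine le_antisymm (minorsIdeal_comp_funLeft_le ρ e s) ?_
  have hρ : (ρ ∘ₗ LinearMap.funLeft R R e) ∘ₗ LinearMap.funLeft R R e.symm = ρ := by
    ext u; simp [LinearMap.funLeft, comp_def]
  conv_lhs => rw [← hρ]
  exact minorsIdeal_comp_funLeft_le _ e.symm s

theorem det_mem_minorsIdeal_of_sumElim (π : (ι → R) →ₗ[R] M) {s n : ℕ} (hsn : s ≤ n)
    (z : Fin n → ι → R) (hz : ∀ a, π (z a) = 0) (c : Fin n → ι ⊕ κ) :
    (of fun a b => Sum.elim (z a) 0 (c b)).det ∈ minorsIdeal π s := by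
  by_cases hc : ∀ b, ∃ l, c b = Sum.inl l
  · choose c₀ hc₀ using hc
    simp_rw [hc₀, Sum.elim_inl]
    exact minorsIdeal_antitone π hsn (det_mem_minorsIdeal π z c₀ hz)
  · push Not at hc
    obtain ⟨b, hb⟩ := hc
    obtain ⟨j, hj⟩ : ∃ j, c b = Sum.inr j := by
      cases h : c b with
      | inl l => exact absurd h (hb l)
      | inr j => exact ⟨j, rfl⟩
    rw [det_eq_zero_of_column_eq_zero b fun a => by simp [hj]]
    exact zero_mem _

/-- Laplace expansion along the rows that are not relations of `π` supported on `ι`. -/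
theorem det_mem_minorsIdeal_of_card_le (π : (ι → R) →ₗ[R] M) {s n : ℕ}
    (r : Fin n → ι ⊕ κ → R) (c : Fin n → ι ⊕ κ) (E : Finset (Fin n)) (hE : s ≤ #E)
    (hrE : ∀ a ∈ E, ∃ z, π z = 0 ∧ r a = Sum.elim z 0) :
    (of fun a b => r a (c b)).det ∈ minorsIdeal π s := by
  induction n with
  | zero =>
    rw [Nat.le_zero.mp (hE.trans (card_le_univ E)), minorsIdeal_zero]
    trivial
  | succ n ih =>
    by_cases hall : ∀ a, ∃ z, π z = 0 ∧ r a = Sum.elim z 0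
    · choose z hz hrz using hall
      simp_rw [hrz]
      exact det_mem_minorsIdeal_of_sumElim π (hE.trans (by simpa using card_le_univ E)) z hz c
    push Not at hall
    obtain ⟨a₀, ha₀⟩ := hall
    have ha₀E : a₀ ∉ E := fun h => by
      obtain ⟨z, hz, hrz⟩ := hrE a₀ h
      exact ha₀ z hz hrz
    rw [det_succ_row _ a₀]
    refine Ideal.sum_mem _ fun j _ => Ideal.mul_mem_left _ _ ?_
    classical
    have hcard : #(E.preimage a₀.succAbove Fin.succAbove_right_injective.injOn) = #E := by
      rw [card_preimage]
      congr 1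
      exact filter_true_of_mem fun e he => by
        simpa using fun h : e = a₀ => ha₀E (h ▸ he)
    exact ih (fun a => r (a₀.succAbove a)) (fun b => c (j.succAbove b)) _ (hcard ▸ hE)
      fun a ha => hrE _ (mem_preimage.mp ha)

end Minors

section Redundant

variable {R : Type*} [CommRing R] {M : Type*} [AddCommGroup M] [Module R M] {ι κ : Type*}

/-- The presentation by the union of the generating families of `π` and `ρ`. -/
def sumCoprod (π : (ι → R) →ₗ[R] M) (ρ : (κ → R) →ₗ[R] M) : (ι ⊕ κ → R) →ₗ[R] M :=
  π ∘ₗ LinearMap.funLeft R R Sum.inl + ρ ∘ₗ LinearMap.funLeft R R Sum.inr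

@[simp]
theorem sumCoprod_apply (π : (ι → R) →ₗ[R] M) (ρ : (κ → R) →ₗ[R] M) (v : ι ⊕ κ → R) :
    sumCoprod π ρ v = π (v ∘ Sum.inl) + ρ (v ∘ Sum.inr) :=
  rfl

theorem sumCoprod_comp_funLeft_sumComm (π : (ι → R) →ₗ[R] M) (ρ : (κ → R) →ₗ[R] M) :
    sumCoprod π ρ ∘ₗ LinearMap.funLeft R R (Equiv.sumComm ι κ) = sumCoprod ρ π := by
  ext v
  rw [LinearMap.comp_apply, sumCoprod_apply, sumCoprod_apply, add_comm]
  rfl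

/-- By pigeonhole, more than `card κ` rows from `range g` include two equal rows. -/
theorem det_mem_minorsIdeal_of_forall_relation_or_mem_range [Fintype κ]
    (π : (ι → R) →ₗ[R] M) (g : κ → ι ⊕ κ → R) {s : ℕ} (r : Fin (s + Fintype.card κ) → ι ⊕ κ → R)
    (c : Fin (s + Fintype.card κ) → ι ⊕ κ)
    (hr : ∀ a, (∃ z, π z = 0 ∧ r a = Sum.elim z 0) ∨ r a ∈ Set.range g) :
    (of fun a b => r a (c b)).det ∈ minorsIdeal π s := by
  classical
  set P : Fin (s + Fintype.card κ) → Prop := fun a => ∃ z, π z = 0 ∧ r a = Sum.elim z 0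
  by_cases hs : s ≤ #{a | P a}
  · exact det_mem_minorsIdeal_of_card_le π r c _ hs fun a ha => (mem_filter.mp ha).2
  have hcard : Fintype.card κ < Fintype.card {a // ¬ P a} := by
    rw [Fintype.card_subtype_compl, Fintype.card_subtype, Fintype.card_fin]
    omega
  choose j hj using fun a : {a // ¬ P a} => (hr a).resolve_left a.2
  obtain ⟨a₁, a₂, hne, heq⟩ := Fintype.exists_ne_map_eq_of_card_lt j hcard
  rw [det_zero_of_row_eq (Subtype.coe_injective.ne hne) (by ext b; simp [← hj, heq])]
  exact zero_mem _

variable [DecidableEq κ] {π : (ι → R) →ₗ[R] M} {ρ : (κ → R) →ₗ[R] M} {W : κ → ι → R}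

theorem sumCoprod_sumElim_neg_single (hW : ∀ j, π (W j) = ρ (Pi.single j 1)) (j : κ) :
    sumCoprod π ρ (Sum.elim (-W j) (Pi.single j 1)) = 0 := by
  simp only [sumCoprod_apply, Sum.elim_comp_inl, Sum.elim_comp_inr, map_neg, hW, neg_add_cancel]

variable [Fintype κ]

theorem sumElim_add_sum_smul_sumElim (v : ι ⊕ κ → R) (W : κ → ι → R) :
    Sum.elim (v ∘ Sum.inl + ∑ j, v (Sum.inr j) • W j) 0 +
      ∑ j, v (Sum.inr j) • Sum.elim (-W j) (Pi.single j 1) = v := by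
  ext (l | j) <;> simp [Finset.sum_apply, Pi.single_apply]

theorem map_add_sum_smul_eq_sumCoprod (hW : ∀ j, π (W j) = ρ (Pi.single j 1))
    (v : ι ⊕ κ → R) : π (v ∘ Sum.inl + ∑ j, v (Sum.inr j) • W j) = sumCoprod π ρ v := by
  rw [sumCoprod_apply, map_add, map_sum]
  congr 1
  conv_rhs => rw [← univ_sum_single (v ∘ Sum.inr), map_sum]
  refine sum_congr rfl fun j _ => ?_
  rw [map_smul, hW, ← map_smul, ← Pi.single_smul', smul_eq_mul, mul_one]
  rfl

theorem minorsIdeal_sumCoprod_le (hW : ∀ j, π (W j) = ρ (Pi.single j 1)) (s : ℕ) :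
    minorsIdeal (sumCoprod π ρ) (s + Fintype.card κ) ≤ minorsIdeal π s := by
  rw [minorsIdeal, Ideal.span_le]
  rintro _ ⟨v, c, hv, rfl⟩
  -- `g j` is the relation expressing the redundant generator `j` through the generators of `π`.
  set g : κ → ι ⊕ κ → R := fun j => Sum.elim (-W j) (Pi.single j 1)
  refine det_mem_of_forall_mem_span (Y := {u | (∃ z, π z = 0 ∧ u = Sum.elim z 0) ∨ u ∈ Set.range g})
    c (fun r hr => det_mem_minorsIdeal_of_forall_relation_or_mem_range π g r c hr) v fun a => ?_
  rw [← sumElim_add_sum_smul_sumElim (v a) W]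
  refine add_mem (Submodule.subset_span (Or.inl ⟨_, ?_, rfl⟩)) (sum_mem fun j _ =>
    Submodule.smul_mem _ _ (Submodule.subset_span (Or.inr ⟨j, rfl⟩)))
  rw [map_add_sum_smul_eq_sumCoprod hW, hv]

theorem minorsIdeal_le_sumCoprod (hW : ∀ j, π (W j) = ρ (Pi.single j 1)) (s : ℕ) :
    minorsIdeal π s ≤ minorsIdeal (sumCoprod π ρ) (s + Fintype.card κ) := by
  rw [minorsIdeal, Ideal.span_le]
  rintro _ ⟨v, c, hv, rfl⟩
  let e : Fin s ⊕ κ ≃ Fin (s + Fintype.card κ) :=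
    (Equiv.sumCongr (.refl _) (Fintype.equivFin κ)).trans finSumFinEquiv
  let V : Fin s ⊕ κ → ι ⊕ κ → R :=
    Sum.elim (fun a => Sum.elim (v a) 0) fun j => Sum.elim (-W j) (Pi.single j 1)
  let C : Fin s ⊕ κ → ι ⊕ κ := Sum.elim (Sum.inl ∘ c) Sum.inr
  have hblock : (of fun a b => V a (C b)) =
      fromBlocks (of fun a b => v a (c b)) 0 (of fun j b => -W j (c b)) 1 := by
    ext (a | j) (b | j') <;> simp [V, C, one_apply, Pi.single_apply, eq_comm]
  have hV : ∀ x, sumCoprod π ρ (V x) = 0 := by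
    rintro (a | j)
    · simp [V, hv]
    · exact sumCoprod_sumElim_neg_single hW j
  have hmem := det_mem_minorsIdeal (sumCoprod π ρ) (fun a => V (e.symm a)) (fun b => C (e.symm b))
    fun a => hV _
  rwa [show (of fun a b => V (e.symm a) (C (e.symm b))) =
      (of fun a b => V a (C b)).submatrix e.symm e.symm from rfl, det_submatrix_equiv_self,
    hblock, det_fromBlocks_zero₁₂, det_one, mul_one] at hmem

theorem minorsIdeal_sumCoprod (hπ : Surjective π) (ρ : (κ → R) →ₗ[R] M) (s : ℕ) :
    minorsIdeal (sumCoprod π ρ) (s + Fintype.card κ) = minorsIdeal π s := by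
  choose W hW using fun j => hπ (ρ (Pi.single j 1))
  exact le_antisymm (minorsIdeal_sumCoprod_le hW s) (minorsIdeal_le_sumCoprod hW s)

end Redundant

section Presentation

variable {R : Type*} [CommRing R] {M : Type*} [AddCommGroup M] [Module R M] {ι κ : Type*}
  [Fintype ι] [DecidableEq ι] [Fintype κ] [DecidableEq κ]

/-- Up to a shift of the size of the minors, both ideals are ideals of minors of the presentation
by the union of the two generating families. -/
theorem minorsIdeal_le_of_surjective {π : (ι → R) →ₗ[R] M} (hπ : Surjective π)
    {ρ : (κ → R) →ₗ[R] M} (hρ : Surjective ρ) (i : ℤ) :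
    minorsIdeal π ((Fintype.card ι - i).toNat) ≤ minorsIdeal ρ ((Fintype.card κ - i).toNat) := by
  by_cases hi : (Fintype.card κ : ℤ) ≤ i
  · rw [show ((Fintype.card κ : ℤ) - i).toNat = 0 by omega, minorsIdeal_zero]
    exact le_top
  rw [← minorsIdeal_sumCoprod hπ ρ, ← minorsIdeal_sumCoprod hρ π,
    ← sumCoprod_comp_funLeft_sumComm π ρ, minorsIdeal_comp_funLeft]
  exact minorsIdeal_antitone _ (by omega)

theorem fittingIdeal_eq_minorsIdeal {ρ : (ι → R) →ₗ[R] M} (hρ : Surjective ρ) (i : ℤ) :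
    fittingIdeal R M i = minorsIdeal ρ ((Fintype.card ι - i).toNat) := by
  refine le_antisymm ?_ ?_
  · rw [fittingIdeal, Ideal.span_le]
    rintro _ ⟨q, π, hπ, v, c, hv, rfl⟩
    refine minorsIdeal_le_of_surjective hπ hρ i ?_
    simpa using det_mem_minorsIdeal π v c hv
  · let e := Fintype.equivFin ι
    rw [← minorsIdeal_comp_funLeft ρ e, minorsIdeal, Ideal.span_le]
    rintro _ ⟨v, c, hv, rfl⟩
    refine Ideal.subset_span ⟨Fintype.card ι, _, ?_, v, c, hv, rfl⟩
    exact hρ.comp (LinearMap.funLeft_surjective_of_injective _ _ _ e.injective)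

end Presentation

section Fitting

variable {R : Type*} [CommRing R] {M : Type*} [AddCommGroup M] [Module R M] {ι κ : Type*}

theorem fittingIdeal_le_of_linearEquiv {N : Type*} [AddCommGroup N] [Module R N] (e : M ≃ₗ[R] N)
    (i : ℤ) : fittingIdeal R M i ≤ fittingIdeal R N i := by
  rw [fittingIdeal, Ideal.span_le]
  rintro _ ⟨q, π, hπ, v, c, hv, rfl⟩
  exact Ideal.subset_span ⟨q, e.toLinearMap ∘ₗ π, e.surjective.comp hπ, v, c,
    fun a => by simp [hv a], rfl⟩

theorem fittingIdeal_congr {N : Type*} [AddCommGroup N] [Module R N] (e : M ≃ₗ[R] N) (i : ℤ) :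
    fittingIdeal R M i = fittingIdeal R N i :=
  le_antisymm (fittingIdeal_le_of_linearEquiv e i) (fittingIdeal_le_of_linearEquiv e.symm i)

theorem minorsIdeal_prod_funLeft_inr (π : (ι → R) →ₗ[R] M) (s : ℕ) :
    minorsIdeal ((π ∘ₗ LinearMap.funLeft R R Sum.inl).prod
      (LinearMap.funLeft R R (Sum.inr : κ → ι ⊕ κ))) s = minorsIdeal π s := by
  refine le_antisymm ?_ ?_ <;> rw [minorsIdeal, Ideal.span_le] <;> rintro _ ⟨v, c, hv, rfl⟩
  · have hv' : ∀ a, v a = Sum.elim (v a ∘ Sum.inl) 0 := fun a => by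
      ext (l | j)
      · rfl
      · exact congr_fun (congr_arg Prod.snd (hv a)) j
    rw [SetLike.mem_coe, funext hv']
    exact det_mem_minorsIdeal_of_sumElim π le_rfl _ (fun a => congr_arg Prod.fst (hv a)) c
  · simpa using det_mem_minorsIdeal ((π ∘ₗ LinearMap.funLeft R R Sum.inl).prod
      (LinearMap.funLeft R R (Sum.inr : κ → ι ⊕ κ))) (fun a => Sum.elim (v a) 0)
      (fun b => Sum.inl (c b)) fun a => Prod.ext (hv a) rfl

theorem fittingIdeal_prod_pi [Module.Finite R M] [Fintype κ] [DecidableEq κ] (i : ℤ) :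
    fittingIdeal R (M × (κ → R)) (i + Fintype.card κ) = fittingIdeal R M i := by
  obtain ⟨n, π, hπ⟩ := Module.Finite.exists_fin' R M
  have hτ : Surjective ((π ∘ₗ LinearMap.funLeft R R Sum.inl).prod
      (LinearMap.funLeft R R (Sum.inr : κ → Fin n ⊕ κ))) := by
    rintro ⟨x, y⟩
    obtain ⟨u, rfl⟩ := hπ x
    exact ⟨Sum.elim u y, rfl⟩
  rw [fittingIdeal_eq_minorsIdeal hτ, fittingIdeal_eq_minorsIdeal hπ, minorsIdeal_prod_funLeft_inr]
  congr 1
  simp only [Fintype.card_sum, Fintype.card_fin]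
  omega

end Fitting

section BaseChange

variable {R : Type*} [CommRing R] {M : Type*} [AddCommGroup M] [Module R M] {ι : Type*}
  [Fintype ι] [DecidableEq ι] (S : Type*) [CommRing S] [Algebra R S]

noncomputable def baseChangePi (π : (ι → R) →ₗ[R] M) : (ι → S) →ₗ[S] S ⊗[R] M :=
  π.baseChange S ∘ₗ (piScalarRight R S S ι).symm.toLinearMap

theorem baseChangePi_comp_piScalarRight (π : (ι → R) →ₗ[R] M) (t : S ⊗[R] (ι → R)) :
    baseChangePi S π (piScalarRight R S S ι t) = π.baseChange S t := by
  rw [baseChangePi, LinearMap.comp_apply, LinearEquiv.coe_coe, LinearEquiv.symm_apply_apply]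

theorem baseChangePi_algebraMap (π : (ι → R) →ₗ[R] M) (x : ι → R) :
    baseChangePi S π (fun j => algebraMap R S (x j)) = (1 : S) ⊗ₜ π x := by
  rw [← LinearMap.baseChange_tmul, ← baseChangePi_comp_piScalarRight, piScalarRight_apply,
    piScalarRightHom_tmul]
  simp [Algebra.smul_def]

variable {S} {π : (ι → R) →ₗ[R] M}

theorem baseChangePi_surjective (hπ : Surjective π) : Surjective (baseChangePi S π) :=
  (LinearMap.lTensor_surjective S hπ).comp (piScalarRight R S S ι).symm.surjective

/-- Right exactness of `S ⊗[R] -`. -/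
theorem mem_span_of_baseChangePi_eq_zero (hπ : Surjective π) {u : ι → S}
    (hu : baseChangePi S π u = 0) :
    u ∈ Submodule.span S {w | ∃ z, π z = 0 ∧ w = fun j => algebraMap R S (z j)} := by
  obtain ⟨t, rfl⟩ := (piScalarRight R S S ι).surjective u
  rw [baseChangePi_comp_piScalarRight, LinearMap.baseChange_eq_ltensor] at hu
  obtain ⟨t, rfl⟩ := (lTensor_exact S (LinearMap.exact_subtype_ker_map π) hπ t).mp hu
  clear hu
  induction t using TensorProduct.induction_on with
  | zero => simp
  | tmul s z =>
    rw [LinearMap.lTensor_tmul, piScalarRight_apply, piScalarRightHom_tmul]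
    convert Submodule.smul_mem _ s
      (Submodule.subset_span (s := {w | ∃ z, π z = 0 ∧ w = fun j => algebraMap R S (z j)})
        ⟨z.1, z.2, rfl⟩) using 1
    ext j
    simp [Algebra.smul_def, mul_comm]
  | add x y hx hy => simpa using add_mem hx hy

theorem minorsIdeal_baseChangePi (hπ : Surjective π) (s : ℕ) :
    minorsIdeal (baseChangePi S π) s = (minorsIdeal π s).map (algebraMap R S) := by
  refine le_antisymm ?_ ?_
  · rw [minorsIdeal, Ideal.span_le]
    rintro _ ⟨v, c, hv, rfl⟩
    refine det_mem_of_forall_mem_span c ?_ v fun a => mem_span_of_baseChangePi_eq_zero hπ (hv a)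
    intro r hr
    choose z hz hrz using hr
    convert Ideal.mem_map_of_mem _ (det_mem_minorsIdeal π z c hz) using 1
    simp_rw [hrz, RingHom.map_det]
    rfl
  · rw [minorsIdeal, Ideal.map_span, Ideal.span_le]
    rintro _ ⟨_, ⟨v, c, hv, rfl⟩, rfl⟩
    rw [RingHom.map_det]
    exact det_mem_minorsIdeal _ (fun a j => algebraMap R S (v a j)) c
      fun a => by rw [baseChangePi_algebraMap, hv a, tmul_zero]

theorem fittingIdeal_baseChange [Module.Finite R M] (i : ℤ) :
    fittingIdeal S (S ⊗[R] M) i = (fittingIdeal R M i).map (algebraMap R S) := by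
  obtain ⟨n, π, hπ⟩ := Module.Finite.exists_fin' R M
  rw [fittingIdeal_eq_minorsIdeal (baseChangePi_surjective hπ), fittingIdeal_eq_minorsIdeal hπ,
    minorsIdeal_baseChangePi hπ]

end BaseChange

/-- `A → A[σ]` is formally smooth, so `H¹` of its cotangent complex vanishes and the first
fundamental sequence `0 → A[σ] ⊗ Ω[A⁄k] → Ω[A[σ]⁄k] → Ω[A[σ]⁄A] → 0` is exact; it splits because
`Ω[A[σ]⁄A]` is free on the `dXⱼ`. -/
theorem KaehlerDifferential.nonempty_mvPolynomial_equiv_prod (k A σ : Type*) [CommRing k]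
    [CommRing A] [Algebra k A] :
    Nonempty (Ω[MvPolynomial σ A⁄k] ≃ₗ[MvPolynomial σ A]
      (MvPolynomial σ A ⊗[A] Ω[A⁄k]) × (σ →₀ MvPolynomial σ A)) := by
  set B := MvPolynomial σ A
  have hinj : Injective (mapBaseChange k A B) := by
    rw [injective_iff_map_eq_zero]
    intro x hx
    obtain ⟨y, rfl⟩ := (Algebra.H1Cotangent.exact_δ_mapBaseChange k A B x).mp hx
    rw [Subsingleton.elim y 0, map_zero]
  obtain ⟨l, hl⟩ :=
    Module.projective_lifting_property (map k A B B) LinearMap.id (map_surjective k A B)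
  exact ⟨((exact_mapBaseChange_map k A B).splitSurjectiveEquiv hinj ⟨l, hl⟩).1.trans
    ((LinearEquiv.refl _ _).prodCongr (mvPolynomialBasis A σ).repr)⟩

/-- Let `k` be a field, `A` a `k`-algebra of finite presentation, and `B = A[t_1,…,t_m]` a
polynomial ring in `m` variables over `A`. Then for every integer `i`, the Fitting ideal
`Fitt_{i+m}(Ω¹_{B/k})` equals the extension to `B` of the Fitting ideal `Fitt_i(Ω¹_{A/k})`. -/
theorem statement5 (k : Type) [Field k] (A : Type) [CommRing A] [Algebra k A]
    (hA : Algebra.FinitePresentation k A) (m : ℕ) (i : ℤ) :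
    fittingIdeal (MvPolynomial (Fin m) A)
        (KaehlerDifferential k (MvPolynomial (Fin m) A)) (i + m) =
      Ideal.map (algebraMap A (MvPolynomial (Fin m) A))
        (fittingIdeal A (KaehlerDifferential k A) i) := by
  have := hA
  obtain ⟨e⟩ := KaehlerDifferential.nonempty_mvPolynomial_equiv_prod k A (Fin m)
  have hprod := fittingIdeal_prod_pi (R := MvPolynomial (Fin m) A)
    (M := MvPolynomial (Fin m) A ⊗[A] Ω[A⁄k]) (κ := Fin m) i
  rw [Fintype.card_fin] at hprod
  rw [fittingIdeal_congr (e.trans ((LinearEquiv.refl _ _).prodCongr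
    (Finsupp.linearEquivFunOnFinite _ _ _))), hprod, fittingIdeal_baseChange]
end

section
/- Let k be a field of characteristic p > 0, and let B be the k-subalgebra of the rational function field k(x_1,x_2,x_3,x_4) generated by x_1, x_2, x_3, x_4 and x_4^{p²}/x_3^p. Then the element x_4^p/x_3 lies in the fraction field of B and is integral over B (indeed (x_4^p/x_3)^p = x_4^{p²}/x_3^p ∈ B), but x_4^p/x_3 does not belong to B. In particular, B is not integrally closed in its fraction field. -/
open MvPolynomial

/-- Let `k` be a field of characteristic `p > 0`, `K = k(x₁,x₂,x₃,x₄)` the rational function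
field in four variables, and let `B` be the `k`-subalgebra of `K` generated by
`x₁, x₂, x₃, x₄` and `x₄^{p²}/x₃^p`.  Then the element `w = x₄^p/x₃` lies in the fraction
field of `B` (it is a quotient of two elements of `B`), its `p`-th power equals
`x₄^{p²}/x₃^p`, which lies in `B` (so `w` is integral over `B`), but `w` does not belong
to `B`.  In particular, `B` is not integrally closed in its fraction field.
(Here the variables `x₁, x₂, x₃, x₄` are `x 0, x 1, x 2, x 3`.) -/
theorem statement8 (k K : Type) [Field k] [Field K] (p : ℕ) [CharP k p] (hp : 0 < p)
    [Algebra (MvPolynomial (Fin 4) k) K] [IsFractionRing (MvPolynomial (Fin 4) k) K]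
    [Algebra k K] [IsScalarTower k (MvPolynomial (Fin 4) k) K]
    (x : Fin 4 → K)
    (hx : ∀ i, x i = algebraMap (MvPolynomial (Fin 4) k) K (MvPolynomial.X i))
    (B : Subalgebra k K)
    (hB : B = Algebra.adjoin k {x 0, x 1, x 2, x 3, x 3 ^ p ^ 2 / x 2 ^ p}) :
    (∃ a ∈ B, ∃ b ∈ B, b ≠ 0 ∧ (x 3 ^ p / x 2) * b = a) ∧
    (x 3 ^ p / x 2) ^ p = x 3 ^ p ^ 2 / x 2 ^ p ∧
    (x 3 ^ p / x 2) ^ p ∈ B ∧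
    IsIntegral B (x 3 ^ p / x 2) ∧
    x 3 ^ p / x 2 ∉ B ∧
    ¬ IsIntegrallyClosed B := by
  classical
  set φ := algebraMap (MvPolynomial (Fin 4) k) K with hφdef
  have hφinj : Function.Injective φ := IsFractionRing.injective _ _
  have hne : ∀ g : MvPolynomial (Fin 4) k, g ≠ 0 → φ g ≠ 0 := by
    intro g hg h
    exact hg (hφinj (by simpa using h))
  have hx2ne : x 2 ≠ 0 := by rw [hx 2]; exact hne _ (X_ne_zero 2)
  have hp1 : p ≠ 1 := CharP.char_ne_one k p
  -- membership of generators
  have hx0B : x 0 ∈ B := hB ▸ Algebra.subset_adjoin (by simp)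
  have hx1B : x 1 ∈ B := hB ▸ Algebra.subset_adjoin (by simp)
  have hx2B : x 2 ∈ B := hB ▸ Algebra.subset_adjoin (by simp)
  have hx3B : x 3 ∈ B := hB ▸ Algebra.subset_adjoin (by simp)
  have huB : x 3 ^ p ^ 2 / x 2 ^ p ∈ B := hB ▸ Algebra.subset_adjoin (by simp)
  -- the image of any polynomial lies in B
  have hpolyB : ∀ g : MvPolynomial (Fin 4) k, φ g ∈ B := by
    intro g
    induction g using MvPolynomial.induction_on with
    | C a =>
        have : φ (C a) = algebraMap k K a := by
          rw [← MvPolynomial.algebraMap_eq, hφdef, ← IsScalarTower.algebraMap_apply]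
        rw [this]; exact B.algebraMap_mem a
    | add f g hf hg => rw [map_add]; exact B.add_mem hf hg
    | mul_X f i hf =>
        rw [map_mul]
        refine B.mul_mem hf ?_
        have hiB : ∀ j : Fin 4, x j ∈ B := by
          intro j
          fin_cases j
          · exact hx0B
          · exact hx1B
          · exact hx2B
          · exact hx3B
        rw [← hx i]; exact hiB i
  -- the key structural result about elements of B
  have key : ∀ b ∈ B, ∃ n : ℕ, ∃ f : MvPolynomial (Fin 4) k,
      b * (x 2) ^ (p * n) = φ f ∧
      ∀ m ∈ f.support, p ^ 2 * n ≤ p * m 2 + m 3 ∧ (p * m 2 + m 3 = p ^ 2 * n → p ∣ m 2) := by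
    rw [hB]
    -- lifting lemma
    have lift : ∀ (b : K) (n j : ℕ) (f : MvPolynomial (Fin 4) k),
        (b * (x 2) ^ (p * n) = φ f ∧
          ∀ m ∈ f.support, p ^ 2 * n ≤ p * m 2 + m 3 ∧ (p * m 2 + m 3 = p ^ 2 * n → p ∣ m 2)) →
        (b * (x 2) ^ (p * (n + j)) = φ (f * X 2 ^ (p * j)) ∧
          ∀ m ∈ (f * X 2 ^ (p * j)).support,
            p ^ 2 * (n + j) ≤ p * m 2 + m 3 ∧ (p * m 2 + m 3 = p ^ 2 * (n + j) → p ∣ m 2)) := by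
      rintro b n j f ⟨hbf, hgood⟩
      constructor
      · rw [map_mul, map_pow, ← hx 2, ← hbf, Nat.mul_add, pow_add]
        ring
      · intro m hm
        have := MvPolynomial.support_mul f (X 2 ^ (p * j)) hm
        rw [support_X_pow] at this
        rw [Finset.mem_add] at this
        obtain ⟨m1, hm1, m2, hm2, rfl⟩ := this
        rw [Finset.mem_singleton] at hm2
        subst hm2
        obtain ⟨h1, h2⟩ := hgood m1 hm1
        have e2 : ((m1 + Finsupp.single (2 : Fin 4) (p * j)) 2 : ℕ) = m1 2 + p * j := by
          simp [Finsupp.single_apply]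
        have e3 : ((m1 + Finsupp.single (2 : Fin 4) (p * j)) 3 : ℕ) = m1 3 := by
          simp [Finsupp.single_apply]
        rw [e2, e3]
        constructor
        · have : p ^ 2 * (n + j) = p ^ 2 * n + p ^ 2 * j := by ring
          have e4 : p * (m1 2 + p * j) + m1 3 = (p * m1 2 + m1 3) + p ^ 2 * j := by ring
          rw [this, e4]
          omega
        · intro heq
          have e4 : p * (m1 2 + p * j) + m1 3 = (p * m1 2 + m1 3) + p ^ 2 * j := by ring
          have e5 : p ^ 2 * (n + j) = p ^ 2 * n + p ^ 2 * j := by ring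
          rw [e4, e5] at heq
          have : p * m1 2 + m1 3 = p ^ 2 * n := by omega
          exact dvd_add (h2 this) ⟨j, rfl⟩
    intro b hb
    induction hb using Algebra.adjoin_induction with
    | mem y hy =>
        simp only [Set.mem_insert_iff, Set.mem_singleton_iff] at hy
        have hXcase : ∀ i : Fin 4, ∃ n : ℕ, ∃ f : MvPolynomial (Fin 4) k,
            x i * (x 2) ^ (p * n) = φ f ∧
            ∀ m ∈ f.support, p ^ 2 * n ≤ p * m 2 + m 3 ∧ (p * m 2 + m 3 = p ^ 2 * n → p ∣ m 2) := by
          intro i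
          refine ⟨0, X i, by simp [hx i], ?_⟩
          intro m hm
          rw [support_X, Finset.mem_singleton] at hm
          subst hm
          constructor
          · simp
          · intro heq
            rcases eq_or_ne i 2 with rfl | hi
            · rw [Finsupp.single_eq_same] at heq
              exact absurd heq (by omega)
            · rw [Finsupp.single_apply, if_neg hi]
              exact dvd_zero p
        rcases hy with rfl | rfl | rfl | rfl | rfl
        · exact hXcase 0
        · exact hXcase 1
        · exact hXcase 2
        · exact hXcase 3
        · refine ⟨1, X 3 ^ p ^ 2, ?_, ?_⟩
          · rw [mul_one, div_mul_cancel₀ _ (pow_ne_zero _ hx2ne), map_pow, ← hx 3]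
          · intro m hm
            rw [support_X_pow, Finset.mem_singleton] at hm
            subst hm
            constructor
            · simp [Finsupp.single_apply]
            · intro _
              simp [Finsupp.single_apply]
    | algebraMap r =>
        refine ⟨0, C r, ?_, ?_⟩
        · rw [Nat.mul_zero, pow_zero, mul_one, ← MvPolynomial.algebraMap_eq, hφdef,
            ← IsScalarTower.algebraMap_apply]
        · intro m hm
          have := support_monomial_subset (s := (0 : Fin 4 →₀ ℕ)) (a := r) (by rwa [← C_apply] : m ∈ (monomial 0 r).support)
          rw [Finset.mem_singleton] at this
          subst this
          simp
    | add y z hy hz hy' hz' =>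
        obtain ⟨n1, f1, h1, g1⟩ := hy'
        obtain ⟨n2, f2, h2, g2⟩ := hz'
        obtain ⟨h1', g1'⟩ := lift y n1 n2 f1 ⟨h1, g1⟩
        obtain ⟨h2', g2'⟩ := lift z n2 n1 f2 ⟨h2, g2⟩
        rw [Nat.add_comm n2 n1] at h2' g2'
        refine ⟨n1 + n2, f1 * X 2 ^ (p * n2) + f2 * X 2 ^ (p * n1), ?_, ?_⟩
        · rw [map_add, ← h1', ← h2', add_mul]
        · intro m hm
          have := MvPolynomial.support_add hm
          rw [Finset.mem_union] at this
          rcases this with h | h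
          · exact g1' m h
          · exact g2' m h
    | mul y z hy hz hy' hz' =>
        obtain ⟨n1, f1, h1, g1⟩ := hy'
        obtain ⟨n2, f2, h2, g2⟩ := hz'
        refine ⟨n1 + n2, f1 * f2, ?_, ?_⟩
        · have e : y * z * x 2 ^ (p * (n1 + n2)) = (y * x 2 ^ (p * n1)) * (z * x 2 ^ (p * n2)) := by
            rw [Nat.mul_add, pow_add]; ring
          rw [e, h1, h2, map_mul]
        · intro m hm
          have := MvPolynomial.support_mul f1 f2 hm
          rw [Finset.mem_add] at this
          obtain ⟨m1, hm1, m2, hm2, rfl⟩ := this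
          obtain ⟨a1, b1⟩ := g1 m1 hm1
          obtain ⟨a2, b2⟩ := g2 m2 hm2
          have e2 : ((m1 + m2) 2 : ℕ) = m1 2 + m2 2 := rfl
          have e3 : ((m1 + m2) 3 : ℕ) = m1 3 + m2 3 := rfl
          rw [e2, e3]
          have e4 : p * (m1 2 + m2 2) + (m1 3 + m2 3) = (p * m1 2 + m1 3) + (p * m2 2 + m2 3) := by
            ring
          have e5 : p ^ 2 * (n1 + n2) = p ^ 2 * n1 + p ^ 2 * n2 := by ring
          rw [e4, e5]
          constructor
          · omega
          · intro heq
            have q1 : p * m1 2 + m1 3 = p ^ 2 * n1 := by omega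
            have q2 : p * m2 2 + m2 3 = p ^ 2 * n2 := by omega
            exact dvd_add (b1 q1) (b2 q2)
  -- w ∉ B
  have hwnot : x 3 ^ p / x 2 ∉ B := by
    intro hw
    obtain ⟨n, f, heq, hgood⟩ := key _ hw
    have heq2 : φ (X 3 ^ p * X 2 ^ (p * n)) = φ (f * X 2) := by
      rw [map_mul, map_mul, map_pow, map_pow, ← hx 3, ← hx 2, ← heq]
      field_simp
    have hpoly : (X 3 : MvPolynomial (Fin 4) k) ^ p * X 2 ^ (p * n) = f * X 2 := hφinj heq2
    rcases Nat.eq_zero_or_pos n with rfl | hn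
    · rw [Nat.mul_zero, pow_zero, mul_one] at hpoly
      apply pow_ne_zero p (X_ne_zero (3 : Fin 4) (R := k))
      have := congrArg (aeval (fun i : Fin 4 => if i = 2 then 0 else X i :
        Fin 4 → MvPolynomial (Fin 4) k)) hpoly
      simp at this
    · have hpn : 1 ≤ p * n := Nat.mul_pos hp hn
      set q := p * n - 1 with hqdef
      have hq : q + 1 = p * n := by omega
      have hpoly2 : ((X 3 : MvPolynomial (Fin 4) k) ^ p * X 2 ^ q) * X 2 = f * X 2 := by
        rw [← hpoly, ← hq, pow_succ]; ring
      have hf : f = (X 3 : MvPolynomial (Fin 4) k) ^ p * X 2 ^ q :=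
        (mul_right_cancel₀ (X_ne_zero 2) hpoly2).symm
      have hm : (Finsupp.single (3 : Fin 4) p + Finsupp.single (2 : Fin 4) q) ∈ f.support := by
        rw [hf, X_pow_eq_monomial, X_pow_eq_monomial, monomial_mul, mem_support_iff,
          coeff_monomial]
        rw [if_pos rfl]
        simp
      obtain ⟨hle, hdvd⟩ := hgood _ hm
      have e2 : ((Finsupp.single (3 : Fin 4) p + Finsupp.single (2 : Fin 4) q) 2 : ℕ) = q := by
        simp [Finsupp.single_apply]
      have e3 : ((Finsupp.single (3 : Fin 4) p + Finsupp.single (2 : Fin 4) q) 3 : ℕ) = p := by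
        simp [Finsupp.single_apply]
      rw [e2, e3] at hle hdvd
      have heqq : p * q + p = p ^ 2 * n := by
        have : p * (q + 1) = p * (p * n) := by rw [hq]
        calc p * q + p = p * (q + 1) := by ring
        _ = p * (p * n) := this
        _ = p ^ 2 * n := by ring
      have hdq : p ∣ q := hdvd heqq
      have hdq1 : p ∣ q + 1 := hq ▸ ⟨n, rfl⟩
      have : p ∣ 1 := by
        have := Nat.dvd_sub hdq1 hdq
        simpa using this
      exact hp1 (Nat.dvd_one.mp this)
  -- first conjunct
  refine ⟨⟨x 3 ^ p, pow_mem hx3B p, x 2, hx2B, hx2ne, div_mul_cancel₀ _ hx2ne⟩, ?_⟩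
  have hwp : (x 3 ^ p / x 2) ^ p = x 3 ^ p ^ 2 / x 2 ^ p := by
    rw [div_pow, ← pow_mul, ← pow_two]
  have hint : IsIntegral B (x 3 ^ p / x 2) := by
    refine ⟨Polynomial.X ^ p - Polynomial.C (⟨x 3 ^ p ^ 2 / x 2 ^ p, huB⟩ : B),
      Polynomial.monic_X_pow_sub_C _ hp.ne', ?_⟩
    rw [Polynomial.eval₂_sub, Polynomial.eval₂_X_pow, Polynomial.eval₂_C, hwp]
    have hc : (algebraMap B K) (⟨x 3 ^ p ^ 2 / x 2 ^ p, huB⟩ : B) = x 3 ^ p ^ 2 / x 2 ^ p := rfl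
    rw [hc, sub_self]
  refine ⟨hwp, hwp ▸ huB, hint, hwnot, ?_⟩
  · -- not integrally closed
    intro hic
    have memnzd : ∀ b : B, (b : K) ≠ 0 → b ∈ nonZeroDivisors B :=
      fun b hb => mem_nonZeroDivisors_of_ne_zero (fun h => hb (congrArg Subtype.val h))
    haveI : IsFractionRing B K := by
      refine ⟨fun y => ?_, fun z => ?_, fun {a b} h => ?_⟩
      · have h0 : ((y : B) : K) ≠ 0 := fun h => nonZeroDivisors.ne_zero y.2 (Subtype.ext h)
        exact isUnit_iff_ne_zero.mpr h0
      · obtain ⟨⟨g, s⟩, hgs⟩ :=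
          IsLocalization.surj (M := nonZeroDivisors (MvPolynomial (Fin 4) k)) (S := K) z
        have hsne : φ (s : MvPolynomial (Fin 4) k) ≠ 0 := hne _ (nonZeroDivisors.ne_zero s.2)
        exact ⟨⟨⟨φ g, hpolyB g⟩, ⟨⟨φ s, hpolyB s⟩,
          memnzd _ hsne⟩⟩, hgs⟩
      · exact ⟨1, by rw [Subtype.ext h]⟩
    obtain ⟨y, hy⟩ := (isIntegrallyClosed_iff K).mp hic hint
    have hyB : (y : K) ∈ B := y.2
    rw [show ((y : K)) = x 3 ^ p / x 2 from hy] at hyB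
    exact hwnot hyB
end
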